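/- In the diagonal setting and flow setting, for every β > 0 with α + β < 1, every element of 𝒜 belongs to D(A^{α+β}) and there exists a constant M > 0 such that ‖A^β(u − v)‖_α ≤ M ‖u − v‖_α for all u,v ∈ 𝒜; that is, A^β is Lipschitz on 𝒜 from D(A^α) into itself. -/

import Mathlib

/-!
Variation of constants on `[-1, 0]` writes each `u ∈ 𝒜` as
`u = e^{-A} Φ_{-1} u + ∫_{-1}^0 e^{A s} F (Φ_s u) ds`. Parabolic smoothing,
`‖A^γ e^{-At} x‖ ≤ t^{-(γ-δ)} ‖A^δ x‖` for `0 ≤ γ - δ ≤ 1` (from `y^ρ e^{-yt} ≤ t^{-ρ}`), puts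
the first term in `D(A^γ)` for `γ = α + β`, and bounds the integrand in `D(A^γ)` by
`(-s)^{-γ} sup ‖F‖`, which is integrable because `γ < 1`. The same decomposition of `u - v`,
with `F` Lipschitz and `Φ_s` Lipschitz uniformly for `|s| ≤ 1`, gives
`‖A^{α+β}(u - v)‖ ≤ C e^μ (1 + K / (1 - α - β)) ‖u - v‖_α`.
-/

open scoped RealInnerProductSpace
open MeasureTheory

noncomputable section

variable {H : Type*} [NormedAddCommGroup H] [InnerProductSpace ℝ H]

/-- `A^α u = ∑_j λ_j^α ⟨u, w_j⟩ w_j` (fractional power of the diagonal operator). -/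
def Apow (w : ℕ → H) (l : ℕ → ℝ) (α : ℝ) (u : H) : H :=
  ∑' j : ℕ, (l j ^ α * ⟪u, w j⟫) • w j

/-- The domain `D(A^α)`. -/
def Dom (w : ℕ → H) (l : ℕ → ℝ) (α : ℝ) : Set H :=
  {u | Summable fun j : ℕ => l j ^ (2 * α) * ⟪u, w j⟫ ^ 2}

/-- `P_n u = ∑_{j=1}^n ⟨u, w_j⟩ w_j` (here `w` is indexed from `0`, so we sum over `j < n`). -/
def Pproj (w : ℕ → H) (n : ℕ) (u : H) : H :=
  ∑ j ∈ Finset.range n, ⟪u, w j⟫ • w j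

/-- `Q_n u = u - P_n u`. -/
def Qproj (w : ℕ → H) (n : ℕ) (u : H) : H := u - Pproj w n u

/-- `e^{-At} u = ∑_j e^{-λ_j t} ⟨u, w_j⟩ w_j`. -/
def heat (w : ℕ → H) (l : ℕ → ℝ) (t : ℝ) (u : H) : H :=
  ∑' j : ℕ, (Real.exp (-(l j) * t) * ⟪u, w j⟫) • w j

open Set Filter
open scoped Interval

namespace HilbertBasis

variable (b : HilbertBasis ℕ ℝ H)

theorem summable_inner_sq (x : H) : Summable fun j => ⟪x, b j⟫ ^ 2 := by
  simpa [real_inner_comm] using b.orthonormal.inner_products_summable (x := x)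

theorem norm_sq_eq_tsum_inner_sq (x : H) : ‖x‖ ^ 2 = ∑' j, ⟪x, b j⟫ ^ 2 := by
  rw [← real_inner_self_eq_norm_sq, ← b.tsum_inner_mul_inner x x]
  simp_rw [real_inner_comm x, sq]

theorem ext_inner {x y : H} (h : ∀ j, ⟪x, b j⟫ = ⟪y, b j⟫) : x = y :=
  b.repr.injective <| lp.ext <| funext fun j => by
    rw [b.repr_apply_apply, b.repr_apply_apply, real_inner_comm, h, real_inner_comm]

variable {b}

theorem hasSum_smul_of_summable_sq {c : ℕ → ℝ} (hc : Summable fun j => c j ^ 2) :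
    HasSum (fun j => c j • b j) (∑' j, c j • b j) := by
  have hmem : Memℓp c 2 := memℓp_gen (by simpa using hc)
  exact (b.hasSum_repr_symm ⟨c, hmem⟩).summable.hasSum

theorem inner_tsum_smul {c : ℕ → ℝ} (hc : Summable fun j => c j ^ 2) (k : ℕ) :
    ⟪∑' j, c j • b j, b k⟫ = c k := by
  have hmem : Memℓp c 2 := memℓp_gen (by simpa using hc)
  rw [(b.hasSum_repr_symm ⟨c, hmem⟩).tsum_eq, real_inner_comm, ← b.repr_apply_apply,
    LinearIsometryEquiv.apply_symm_apply]

end HilbertBasis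

section Diagonal

variable {b : HilbertBasis ℕ ℝ H} {l : ℕ → ℝ} {γ : ℝ} {x y : H}

theorem mem_Dom_iff {w : ℕ → H} (hl : ∀ j, 0 ≤ l j) :
    x ∈ Dom w l γ ↔ Summable fun j => (l j ^ γ * ⟪x, w j⟫) ^ 2 := by
  refine summable_congr fun j => ?_
  rw [mul_pow, ← Real.rpow_natCast (l j ^ γ), ← Real.rpow_mul (hl j)]
  norm_num [mul_comm]

theorem mem_Dom_zero (x : H) : x ∈ Dom b l 0 := by
  simpa [Dom] using b.summable_inner_sq x

theorem sub_mem_Dom (hl : ∀ j, 0 ≤ l j) (hx : x ∈ Dom b l γ) (hy : y ∈ Dom b l γ) :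
    x - y ∈ Dom b l γ := by
  refine Summable.of_nonneg_of_le (fun j => ?_) (fun j => ?_) ((hx.mul_left 2).add (hy.mul_left 2))
  · have := Real.rpow_nonneg (hl j) (2 * γ)
    positivity
  · have := Real.rpow_nonneg (hl j) (2 * γ)
    rw [inner_sub_left]
    nlinarith [sq_nonneg (⟪x, b j⟫ + ⟪y, b j⟫)]

theorem Dom_subset_Dom {β : ℝ} (hl : ∀ j, 0 ≤ l j) (hβ : 0 ≤ β) (hβγ : β ≤ γ) :
    Dom b l γ ⊆ Dom b l β := fun x hx => by
  refine Summable.of_nonneg_of_le (fun j => ?_) (fun j => ?_) ((b.summable_inner_sq x).add hx)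
  · have := Real.rpow_nonneg (hl j) (2 * β)
    positivity
  · have hpow : l j ^ (2 * β) ≤ 1 + l j ^ (2 * γ) := by
      rcases le_total (l j) 1 with h | h
      · linarith [Real.rpow_le_one (hl j) h (by linarith : 0 ≤ 2 * β),
          Real.rpow_nonneg (hl j) (2 * γ)]
      · linarith [Real.rpow_le_rpow_of_exponent_le h (by linarith : 2 * β ≤ 2 * γ)]
    nlinarith [sq_nonneg ⟪x, b j⟫]

theorem hasSum_Apow (hl : ∀ j, 0 ≤ l j) (hx : x ∈ Dom b l γ) :
    HasSum (fun j => (l j ^ γ * ⟪x, b j⟫) • b j) (Apow b l γ x) :=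
  HilbertBasis.hasSum_smul_of_summable_sq ((mem_Dom_iff hl).1 hx)

theorem inner_Apow (hl : ∀ j, 0 ≤ l j) (hx : x ∈ Dom b l γ) (k : ℕ) :
    ⟪Apow b l γ x, b k⟫ = l k ^ γ * ⟪x, b k⟫ :=
  HilbertBasis.inner_tsum_smul ((mem_Dom_iff hl).1 hx) k

theorem norm_Apow_sq (hl : ∀ j, 0 ≤ l j) (hx : x ∈ Dom b l γ) :
    ‖Apow b l γ x‖ ^ 2 = ∑' j, (l j ^ γ * ⟪x, b j⟫) ^ 2 := by
  simp only [b.norm_sq_eq_tsum_inner_sq, inner_Apow hl hx]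

theorem mem_Dom_and_Apow_eq_of_inner {V : H} (hl : ∀ j, 0 ≤ l j)
    (hV : ∀ k, ⟪V, b k⟫ = l k ^ γ * ⟪x, b k⟫) : x ∈ Dom b l γ ∧ Apow b l γ x = V := by
  have hx : x ∈ Dom b l γ := (mem_Dom_iff hl).2 <| by
    simpa only [hV] using b.summable_inner_sq V
  exact ⟨hx, b.ext_inner fun k => by rw [inner_Apow hl hx, hV]⟩

theorem Apow_zero (x : H) : Apow b l 0 x = x := by
  conv_rhs => rw [← (b.hasSum_repr x).tsum_eq]
  refine tsum_congr fun j => ?_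
  rw [Real.rpow_zero, one_mul, b.repr_apply_apply, real_inner_comm]

theorem Apow_sub (hl : ∀ j, 0 ≤ l j) (hx : x ∈ Dom b l γ) (hy : y ∈ Dom b l γ) :
    Apow b l γ (x - y) = Apow b l γ x - Apow b l γ y :=
  b.ext_inner fun k => by
    rw [inner_Apow hl (sub_mem_Dom hl hx hy), inner_sub_left, inner_sub_left, inner_Apow hl hx,
      inner_Apow hl hy, mul_sub]

theorem Apow_Apow {α β : ℝ} (hl : ∀ j, 0 < l j) (hα : 0 ≤ α) (hβ : 0 ≤ β)
    (hx : x ∈ Dom b l (α + β)) : Apow b l α (Apow b l β x) = Apow b l (α + β) x := by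
  have hl' : ∀ j, 0 ≤ l j := fun j => (hl j).le
  have hxβ := Dom_subset_Dom hl' hβ (by linarith) hx
  refine (mem_Dom_and_Apow_eq_of_inner (V := Apow b l (α + β) x) hl' fun k => ?_).2
  rw [inner_Apow hl' hx, inner_Apow hl' hxβ, ← mul_assoc, ← Real.rpow_add (hl k)]

end Diagonal

theorem Real.rpow_mul_exp_neg_mul_le {ρ y t : ℝ} (hρ0 : 0 ≤ ρ) (hρ1 : ρ ≤ 1) (hy : 0 < y)
    (ht : 0 < t) : y ^ ρ * Real.exp (-y * t) ≤ t ^ (-ρ) := by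
  have hyt : 0 < y * t := mul_pos hy ht
  have hexp : (y * t) ^ ρ ≤ Real.exp (y * t) := by
    rcases le_total (y * t) 1 with h | h
    · exact (Real.rpow_le_one hyt.le h hρ0).trans (Real.one_le_exp hyt.le)
    · calc (y * t) ^ ρ ≤ (y * t) ^ (1 : ℝ) := Real.rpow_le_rpow_of_exponent_le h hρ1
        _ = y * t := Real.rpow_one _
        _ ≤ Real.exp (y * t) := by linarith [Real.add_one_le_exp (y * t)]
  have htρ : 0 < t ^ ρ := Real.rpow_pos_of_pos ht ρ
  rw [Real.rpow_neg ht.le, neg_mul, Real.exp_neg, ← div_eq_mul_inv, div_le_iff₀ (Real.exp_pos _),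
    ← div_eq_inv_mul, le_div_iff₀ htρ, ← Real.mul_rpow hy.le ht.le]
  exact hexp

section Heat

variable {b : HilbertBasis ℕ ℝ H} {l : ℕ → ℝ} {t : ℝ}

theorem inner_heat (hl : ∀ j, 0 ≤ l j) (ht : 0 ≤ t) (x : H) (k : ℕ) :
    ⟪heat b l t x, b k⟫ = Real.exp (-l k * t) * ⟪x, b k⟫ := by
  refine HilbertBasis.inner_tsum_smul ?_ k
  refine (b.summable_inner_sq x).of_nonneg_of_le (fun j => sq_nonneg _) fun j => ?_
  have h1 : Real.exp (-l j * t) ≤ 1 := Real.exp_le_one_iff.2 (by nlinarith [hl j])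
  have h0 := Real.exp_pos (-l j * t)
  rw [mul_pow]
  nlinarith [sq_nonneg ⟪x, b j⟫, mul_le_mul h1 h1 h0.le zero_le_one]

theorem heat_sub (hl : ∀ j, 0 ≤ l j) (ht : 0 ≤ t) (x y : H) :
    heat b l t (x - y) = heat b l t x - heat b l t y :=
  b.ext_inner fun k => by
    rw [inner_heat hl ht, inner_sub_left, inner_sub_left, inner_heat hl ht, inner_heat hl ht,
      mul_sub]

theorem sq_coeff_Apow_heat_le {γ δ : ℝ} (hl : ∀ j, 0 < l j) (hδγ : δ ≤ γ) (hγδ : γ - δ ≤ 1)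
    (ht : 0 < t) (x : H) (j : ℕ) :
    (l j ^ γ * ⟪heat b l t x, b j⟫) ^ 2 ≤ (t ^ (-(γ - δ))) ^ 2 * (l j ^ δ * ⟪x, b j⟫) ^ 2 := by
  have hbound := Real.rpow_mul_exp_neg_mul_le (sub_nonneg.2 hδγ) hγδ (hl j) ht
  have h0 : 0 ≤ l j ^ (γ - δ) * Real.exp (-l j * t) :=
    mul_nonneg (Real.rpow_nonneg (hl j).le _) (Real.exp_pos _).le
  have hpow : l j ^ γ = l j ^ (γ - δ) * l j ^ δ := by
    rw [← Real.rpow_add (hl j), sub_add_cancel]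
  have hsplit : l j ^ γ * ⟪heat b l t x, b j⟫
      = (l j ^ (γ - δ) * Real.exp (-l j * t)) * (l j ^ δ * ⟪x, b j⟫) := by
    rw [inner_heat (fun j => (hl j).le) ht.le, hpow]
    ring
  rw [hsplit, mul_pow]
  exact mul_le_mul_of_nonneg_right (pow_le_pow_left₀ h0 hbound 2) (sq_nonneg _)

theorem heat_mem_Dom {γ δ : ℝ} (hl : ∀ j, 0 < l j) (hδγ : δ ≤ γ) (hγδ : γ - δ ≤ 1)
    (ht : 0 < t) {x : H} (hx : x ∈ Dom b l δ) : heat b l t x ∈ Dom b l γ := by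
  have hl' : ∀ j, 0 ≤ l j := fun j => (hl j).le
  exact (mem_Dom_iff hl').2 <| (((mem_Dom_iff hl').1 hx).mul_left _).of_nonneg_of_le
    (fun j => sq_nonneg _) (sq_coeff_Apow_heat_le hl hδγ hγδ ht x)

theorem norm_Apow_heat_le {γ δ : ℝ} (hl : ∀ j, 0 < l j) (hδγ : δ ≤ γ) (hγδ : γ - δ ≤ 1)
    (ht : 0 < t) {x : H} (hx : x ∈ Dom b l δ) :
    ‖Apow b l γ (heat b l t x)‖ ≤ t ^ (-(γ - δ)) * ‖Apow b l δ x‖ := by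
  have hl' : ∀ j, 0 ≤ l j := fun j => (hl j).le
  have hsq : ‖Apow b l γ (heat b l t x)‖ ^ 2 ≤ (t ^ (-(γ - δ)) * ‖Apow b l δ x‖) ^ 2 := by
    rw [mul_pow, norm_Apow_sq hl' (heat_mem_Dom hl hδγ hγδ ht hx), norm_Apow_sq hl' hx,
      ← tsum_mul_left]
    exact Summable.tsum_le_tsum (sq_coeff_Apow_heat_le hl hδγ hγδ ht x)
      ((mem_Dom_iff hl').1 (heat_mem_Dom hl hδγ hγδ ht hx)) (((mem_Dom_iff hl').1 hx).mul_left _)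
  exact (pow_le_pow_iff_left₀ (norm_nonneg _)
    (mul_nonneg (Real.rpow_nonneg ht.le _) (norm_nonneg _)) two_ne_zero).1 hsq

theorem norm_Apow_heat_le_norm {γ : ℝ} (hl : ∀ j, 0 < l j) (hγ0 : 0 ≤ γ) (hγ1 : γ ≤ 1)
    (ht : 0 < t) (x : H) : ‖Apow b l γ (heat b l t x)‖ ≤ t ^ (-γ) * ‖x‖ := by
  simpa [Apow_zero] using
    norm_Apow_heat_le hl hγ0 (by linarith : γ - 0 ≤ 1) ht (mem_Dom_zero (b := b) (l := l) x)

end Heat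

theorem intervalIntegrable_sub_rpow_neg {γ : ℝ} (hγ : γ < 1) (t₀ t : ℝ) :
    IntervalIntegrable (fun s => (t - s) ^ (-γ)) volume t₀ t := by
  simpa using (intervalIntegral.intervalIntegrable_rpow' (r := -γ) (a := t - t₀) (b := t - t)
    (by linarith)).comp_sub_left t

theorem integral_sub_rpow_neg {γ : ℝ} (hγ : γ < 1) (t₀ t : ℝ) :
    ∫ s in t₀..t, (t - s) ^ (-γ) = (t - t₀) ^ (1 - γ) / (1 - γ) := by
  rw [intervalIntegral.integral_comp_sub_left (fun x => x ^ (-γ)), sub_self,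
    integral_rpow (Or.inl (by linarith)), Real.zero_rpow (by linarith), sub_zero, neg_add_eq_sub]

theorem ae_restrict_uIoc_mem_Ioo {a b : ℝ} (h : a ≤ b) :
    ∀ᵐ s ∂volume.restrict (Ι a b), s ∈ Ioo a b := by
  rw [uIoc_of_le h, ← Measure.restrict_congr_set Ioo_ae_eq_Ioc]
  exact ae_restrict_mem measurableSet_Ioo

section Integral

variable {b : HilbertBasis ℕ ℝ H} {l : ℕ → ℝ} {γ : ℝ}

theorem aestronglyMeasurable_Apow {X : Type*} [MeasurableSpace X] {μ : Measure X} {f : X → H}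
    (hl : ∀ j, 0 ≤ l j) (hf : AEStronglyMeasurable f μ) (hdom : ∀ᵐ s ∂μ, f s ∈ Dom b l γ) :
    AEStronglyMeasurable (fun s => Apow b l γ (f s)) μ := by
  refine aestronglyMeasurable_of_tendsto_ae atTop
    (f := fun n s => ∑ j ∈ Finset.range n, (l j ^ γ * ⟪f s, b j⟫) • b j) (fun n => ?_) ?_
  · exact (by fun_prop : Continuous fun x : H => ∑ j ∈ Finset.range n, (l j ^ γ * ⟪x, b j⟫) • b j)
      |>.comp_aestronglyMeasurable hf
  · filter_upwards [hdom] with s hs using (hasSum_Apow hl hs).tendsto_sum_nat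

variable {g : ℝ → H} {B t₀ t : ℝ}

theorem ae_norm_Apow_heat_le (hl : ∀ j, 0 < l j) (hγ0 : 0 ≤ γ) (hγ1 : γ < 1) (h : t₀ ≤ t)
    (hB : ∀ s ∈ Ioo t₀ t, ‖g s‖ ≤ B) :
    ∀ᵐ s ∂volume.restrict (Ι t₀ t),
      ‖Apow b l γ (heat b l (t - s) (g s))‖ ≤ (t - s) ^ (-γ) * B := by
  filter_upwards [ae_restrict_uIoc_mem_Ioo h] with s hs
  have hts : 0 < t - s := sub_pos.2 hs.2
  exact (norm_Apow_heat_le_norm hl hγ0 hγ1.le hts _).trans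
    (mul_le_mul_of_nonneg_left (hB s hs) (Real.rpow_nonneg hts.le _))

theorem intervalIntegrable_Apow_heat (hl : ∀ j, 0 < l j) (hγ0 : 0 ≤ γ) (hγ1 : γ < 1)
    (h : t₀ ≤ t) (hg : IntervalIntegrable (fun s => heat b l (t - s) (g s)) volume t₀ t)
    (hB : ∀ s ∈ Ioo t₀ t, ‖g s‖ ≤ B) :
    IntervalIntegrable (fun s => Apow b l γ (heat b l (t - s) (g s))) volume t₀ t := by
  refine ((intervalIntegrable_sub_rpow_neg hγ1 t₀ t).mul_const B).mono_fun' ?_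
    (ae_norm_Apow_heat_le hl hγ0 hγ1 h hB)
  refine aestronglyMeasurable_Apow (fun j => (hl j).le) hg.def'.aestronglyMeasurable ?_
  filter_upwards [ae_restrict_uIoc_mem_Ioo h] with s hs
  exact heat_mem_Dom hl hγ0 (by linarith) (sub_pos.2 hs.2) (mem_Dom_zero _)

theorem inner_integral_Apow_heat [CompleteSpace H] (hl : ∀ j, 0 < l j) (hγ0 : 0 ≤ γ) (hγ1 : γ < 1)
    (h : t₀ ≤ t) (hg : IntervalIntegrable (fun s => heat b l (t - s) (g s)) volume t₀ t)
    (hB : ∀ s ∈ Ioo t₀ t, ‖g s‖ ≤ B) (k : ℕ) :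
    ⟪∫ s in t₀..t, Apow b l γ (heat b l (t - s) (g s)), b k⟫
      = l k ^ γ * ⟪∫ s in t₀..t, heat b l (t - s) (g s), b k⟫ := by
  have hL := (innerSL ℝ (b k)).intervalIntegral_comp_comm
    (intervalIntegrable_Apow_heat hl hγ0 hγ1 h hg hB)
  have hL' := (innerSL ℝ (b k)).intervalIntegral_comp_comm hg
  simp only [innerSL_apply_apply] at hL hL'
  rw [real_inner_comm, ← hL, real_inner_comm, ← hL', ← intervalIntegral.integral_const_mul]
  refine intervalIntegral.integral_congr_ae_restrict ?_
  filter_upwards [ae_restrict_uIoc_mem_Ioo h] with s hs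
  rw [real_inner_comm, inner_Apow (fun j => (hl j).le)
    (heat_mem_Dom hl hγ0 (by linarith) (sub_pos.2 hs.2) (mem_Dom_zero _)), real_inner_comm]

theorem norm_integral_Apow_heat_le (hl : ∀ j, 0 < l j) (hγ0 : 0 ≤ γ) (hγ1 : γ < 1)
    (h : t₀ ≤ t) (hB : ∀ s ∈ Ioo t₀ t, ‖g s‖ ≤ B) :
    ‖∫ s in t₀..t, Apow b l γ (heat b l (t - s) (g s))‖ ≤ B * ((t - t₀) ^ (1 - γ) / (1 - γ)) := by
  refine (intervalIntegral.norm_integral_le_of_norm_le h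
    (ae_imp_of_ae_restrict ?_) ((intervalIntegrable_sub_rpow_neg hγ1 t₀ t).mul_const B)).trans_eq ?_
  · simpa [uIoc_of_le h] using ae_norm_Apow_heat_le hl hγ0 hγ1 h hB
  · rw [intervalIntegral.integral_mul_const, integral_sub_rpow_neg hγ1, mul_comm]

end Integral

theorem mem_Dom_and_norm_Apow_le_of_eq_heat_add_integral [CompleteSpace H]
    {b : HilbertBasis ℕ ℝ H} {l : ℕ → ℝ} {α γ t₀ t B : ℝ} {x y : H} {g : ℝ → H}
    (hl : ∀ j, 0 < l j) (hα : 0 ≤ α) (hαγ : α ≤ γ) (hγ1 : γ < 1) (h : t₀ < t)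
    (hy : y ∈ Dom b l α) (hg : IntervalIntegrable (fun s => heat b l (t - s) (g s)) volume t₀ t)
    (hB : ∀ s ∈ Ioo t₀ t, ‖g s‖ ≤ B)
    (hx : x = heat b l (t - t₀) y + ∫ s in t₀..t, heat b l (t - s) (g s)) :
    x ∈ Dom b l γ ∧ ‖Apow b l γ x‖
      ≤ (t - t₀) ^ (-(γ - α)) * ‖Apow b l α y‖ + B * ((t - t₀) ^ (1 - γ) / (1 - γ)) := by
  have hl' : ∀ j, 0 ≤ l j := fun j => (hl j).le
  have hγ0 : 0 ≤ γ := hα.trans hαγ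
  have hγα : γ - α ≤ 1 := by linarith
  have hheat := heat_mem_Dom hl hαγ hγα (sub_pos.2 h) hy
  have hV : ∀ k, ⟪Apow b l γ (heat b l (t - t₀) y)
      + ∫ s in t₀..t, Apow b l γ (heat b l (t - s) (g s)), b k⟫ = l k ^ γ * ⟪x, b k⟫ := fun k => by
    rw [inner_add_left, inner_Apow hl' hheat, inner_integral_Apow_heat hl hγ0 hγ1 h.le hg hB,
      hx, inner_add_left, mul_add]
  obtain ⟨hxγ, hAx⟩ := mem_Dom_and_Apow_eq_of_inner hl' hV
  refine ⟨hxγ, hAx ▸ (norm_add_le _ _).trans (add_le_add ?_ ?_)⟩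
  · exact norm_Apow_heat_le hl hαγ hγα (sub_pos.2 h) hy
  · exact norm_integral_Apow_heat_le hl hγ0 hγ1 h.le hB

theorem sub_eq_heat_add_integral {b : HilbertBasis ℕ ℝ H} {l : ℕ → ℝ} {t₀ t : ℝ}
    {x₁ x₂ y₁ y₂ : H} {g₁ g₂ : ℝ → H} (hl : ∀ j, 0 ≤ l j) (h : t₀ ≤ t)
    (hg₁ : IntervalIntegrable (fun s => heat b l (t - s) (g₁ s)) volume t₀ t)
    (hg₂ : IntervalIntegrable (fun s => heat b l (t - s) (g₂ s)) volume t₀ t)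
    (hx₁ : x₁ = heat b l (t - t₀) y₁ + ∫ s in t₀..t, heat b l (t - s) (g₁ s))
    (hx₂ : x₂ = heat b l (t - t₀) y₂ + ∫ s in t₀..t, heat b l (t - s) (g₂ s)) :
    IntervalIntegrable (fun s => heat b l (t - s) (g₁ s - g₂ s)) volume t₀ t ∧
    x₁ - x₂ = heat b l (t - t₀) (y₁ - y₂) + ∫ s in t₀..t, heat b l (t - s) (g₁ s - g₂ s) := by
  have hsub : EqOn (fun s => heat b l (t - s) (g₁ s) - heat b l (t - s) (g₂ s))
      (fun s => heat b l (t - s) (g₁ s - g₂ s)) (uIcc t₀ t) := fun s hs => by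
    rw [uIcc_of_le h] at hs
    exact (heat_sub hl (sub_nonneg.2 hs.2) _ _).symm
  refine ⟨(hg₁.sub hg₂).congr (hsub.mono uIoc_subset_uIcc), ?_⟩
  rw [← intervalIntegral.integral_congr hsub, intervalIntegral.integral_sub hg₁ hg₂,
    heat_sub hl (sub_nonneg.2 h), hx₁, hx₂]
  abel

theorem exists_norm_le_of_lipschitz_Apow {b : HilbertBasis ℕ ℝ H} {l : ℕ → ℝ} {α K R : ℝ}
    {𝒜 : Set H} {F : H → H} (hl : ∀ j, 0 ≤ l j) (hK : 0 ≤ K) (hsub : 𝒜 ⊆ Dom b l α)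
    (hR : ∀ u ∈ 𝒜, ‖Apow b l α u‖ ≤ R)
    (hF : ∀ u ∈ 𝒜, ∀ v ∈ 𝒜, ‖F u - F v‖ ≤ K * ‖Apow b l α (u - v)‖) :
    ∃ B, ∀ x ∈ 𝒜, ‖F x‖ ≤ B := by
  obtain rfl | ⟨u, hu⟩ := 𝒜.eq_empty_or_nonempty
  · exact ⟨0, by simp⟩
  refine ⟨‖F u‖ + K * (R + R), fun x hx => ?_⟩
  calc ‖F x‖ ≤ ‖F u‖ + ‖F x - F u‖ := norm_le_insert' _ _
    _ ≤ ‖F u‖ + K * ‖Apow b l α (x - u)‖ := by gcongr; exact hF x hx u hu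
    _ ≤ ‖F u‖ + K * (R + R) := by
      rw [Apow_sub hl (hsub hx) (hsub hu)]
      gcongr
      exact (norm_sub_le _ _).trans (add_le_add (hR x hx) (hR u hu))

theorem statement4_general [CompleteSpace H] (w : ℕ → H) (l : ℕ → ℝ)
    (hw : Orthonormal ℝ w)
    (hspan : ⊤ ≤ (Submodule.span ℝ (Set.range w)).topologicalClosure)
    (hpos : ∀ j, 0 < l j)
    -- flow setting
    (α : ℝ) (hα0 : 0 ≤ α)
    (K C μ : ℝ) (hK : 0 < K) (hC : 1 ≤ C) (hμ : 0 < μ)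
    (𝒜 : Set H) (hsub : 𝒜 ⊆ Dom w l α)
    (hbdd : ∃ R : ℝ, ∀ u ∈ 𝒜, ‖Apow w l α u‖ ≤ R)
    (F : H → H)
    (hF : ∀ u ∈ 𝒜, ∀ v ∈ 𝒜, ‖F u - F v‖ ≤ K * ‖Apow w l α (u - v)‖)
    (Φ : ℝ → H → H)
    (hΦA : ∀ (t : ℝ), ∀ u ∈ 𝒜, Φ t u ∈ 𝒜)
    (hΦ0 : ∀ u ∈ 𝒜, Φ 0 u = u)
    (hInt : ∀ u ∈ 𝒜, ∀ t₀ t : ℝ,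
      IntervalIntegrable (fun s => heat w l (t - s) (F (Φ s u))) volume t₀ t)
    (hVoc : ∀ u ∈ 𝒜, ∀ t₀ t : ℝ, t₀ ≤ t →
      Φ t u = heat w l (t - t₀) (Φ t₀ u) + ∫ s in t₀..t, heat w l (t - s) (F (Φ s u)))
    (hLip : ∀ (t : ℝ), ∀ u ∈ 𝒜, ∀ v ∈ 𝒜,
      ‖Apow w l α (Φ t u - Φ t v)‖ ≤ C * Real.exp (μ * |t|) * ‖Apow w l α (u - v)‖)
    -- conclusion
    (β : ℝ) (hβ : 0 < β) (hαβ : α + β < 1) :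
    (∀ u ∈ 𝒜, u ∈ Dom w l (α + β)) ∧
    ∃ M : ℝ, 0 < M ∧ ∀ u ∈ 𝒜, ∀ v ∈ 𝒜,
      ‖Apow w l α (Apow w l β (u - v))‖ ≤ M * ‖Apow w l α (u - v)‖ := by
  obtain ⟨b, rfl⟩ : ∃ b : HilbertBasis ℕ ℝ H, ⇑b = w := ⟨_, HilbertBasis.coe_mk hw hspan⟩
  have hl : ∀ j, 0 ≤ l j := fun j => (hpos j).le
  have hαγ : α ≤ α + β := by linarith
  obtain ⟨R, hR⟩ := hbdd
  obtain ⟨B, hB⟩ := exists_norm_le_of_lipschitz_Apow hl hK.le hsub hR hF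
  have hrep : ∀ u ∈ 𝒜, u = heat b l (0 - -1) (Φ (-1) u)
      + ∫ s in (-1 : ℝ)..0, heat b l (0 - s) (F (Φ s u)) := fun u hu => by
    simpa only [hΦ0 u hu] using hVoc u hu (-1) 0 (by norm_num)
  have hγ : 0 < 1 - (α + β) := by linarith
  refine ⟨fun u hu => (mem_Dom_and_norm_Apow_le_of_eq_heat_add_integral hpos hα0 hαγ hαβ
    (by norm_num) (hsub (hΦA _ u hu)) (hInt u hu _ _) (fun s _ => hB _ (hΦA s u hu))
    (hrep u hu)).1, C * Real.exp μ * (1 + K / (1 - (α + β))), by positivity, fun u hu v hv => ?_⟩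
  set D := ‖Apow b l α (u - v)‖
  have hflow : ∀ s ∈ Icc (-1 : ℝ) 0, ‖Apow b l α (Φ s u - Φ s v)‖ ≤ C * Real.exp μ * D :=
    fun s hs => (hLip s u hu v hv).trans <| by
      gcongr
      exact mul_le_of_le_one_right hμ.le (abs_le.2 ⟨hs.1, by linarith [hs.2]⟩)
  obtain ⟨hint, hrep_sub⟩ := sub_eq_heat_add_integral hl (by norm_num) (hInt u hu _ _)
    (hInt v hv _ _) (hrep u hu) (hrep v hv)
  obtain ⟨hmem, hnorm⟩ := mem_Dom_and_norm_Apow_le_of_eq_heat_add_integral hpos hα0 hαγ hαβ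
    (by norm_num) (sub_mem_Dom hl (hsub (hΦA _ u hu)) (hsub (hΦA _ v hv))) hint
    (fun s hs => (hF _ (hΦA s u hu) _ (hΦA s v hv)).trans
      (mul_le_mul_of_nonneg_left (hflow s (Ioo_subset_Icc_self hs)) hK.le)) hrep_sub
  rw [Apow_Apow hpos hα0 hβ.le hmem]
  refine hnorm.trans ?_
  norm_num only [sub_neg_eq_add, zero_add, Real.one_rpow, one_mul]
  calc _ ≤ C * Real.exp μ * D + K * (C * Real.exp μ * D) * (1 / (1 - (α + β))) := by
        gcongr; exact hflow (-1) (by norm_num)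
    _ = _ := by ring

/-- in the diagonal and flow settings, for every `β > 0` with `α + β < 1`, every
element of `𝒜` belongs to `D(A^{α+β})` and there exists `M > 0` such that
`‖A^β(u - v)‖_α ≤ M ‖u - v‖_α` for all `u, v ∈ 𝒜`. -/
theorem statement4 [CompleteSpace H] (w : ℕ → H) (l : ℕ → ℝ)
    (hw : Orthonormal ℝ w)
    (hspan : ⊤ ≤ (Submodule.span ℝ (Set.range w)).topologicalClosure)
    (hmono : Monotone l) (hpos : ∀ j, 0 < l j)
    (hlim : Filter.Tendsto l Filter.atTop Filter.atTop)
    -- flow setting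
    (α : ℝ) (hα0 : 0 ≤ α) (hα1 : α < 1)
    (K C μ : ℝ) (hK : 0 < K) (hC : 1 ≤ C) (hμ : 0 < μ)
    (𝒜 : Set H) (hcomp : IsCompact 𝒜) (hsub : 𝒜 ⊆ Dom w l α)
    (hbdd : ∃ R : ℝ, ∀ u ∈ 𝒜, ‖Apow w l α u‖ ≤ R)
    (F : H → H)
    (hF : ∀ u ∈ 𝒜, ∀ v ∈ 𝒜, ‖F u - F v‖ ≤ K * ‖Apow w l α (u - v)‖)
    (Φ : ℝ → H → H)
    (hΦA : ∀ (t : ℝ), ∀ u ∈ 𝒜, Φ t u ∈ 𝒜)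
    (hΦ0 : ∀ u ∈ 𝒜, Φ 0 u = u)
    (hΦadd : ∀ (t s : ℝ), ∀ u ∈ 𝒜, Φ (t + s) u = Φ t (Φ s u))
    (hInt : ∀ u ∈ 𝒜, ∀ t₀ t : ℝ,
      IntervalIntegrable (fun s => heat w l (t - s) (F (Φ s u))) volume t₀ t)
    (hVoc : ∀ u ∈ 𝒜, ∀ t₀ t : ℝ, t₀ ≤ t →
      Φ t u = heat w l (t - t₀) (Φ t₀ u) + ∫ s in t₀..t, heat w l (t - s) (F (Φ s u)))
    (hLip : ∀ (t : ℝ), ∀ u ∈ 𝒜, ∀ v ∈ 𝒜,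
      ‖Apow w l α (Φ t u - Φ t v)‖ ≤ C * Real.exp (μ * |t|) * ‖Apow w l α (u - v)‖)
    -- conclusion
    (β : ℝ) (hβ : 0 < β) (hαβ : α + β < 1) :
    (∀ u ∈ 𝒜, u ∈ Dom w l (α + β)) ∧
    ∃ M : ℝ, 0 < M ∧ ∀ u ∈ 𝒜, ∀ v ∈ 𝒜,
      ‖Apow w l α (Apow w l β (u - v))‖ ≤ M * ‖Apow w l α (u - v)‖ :=
  statement4_general w l hw hspan hpos α hα0 K C μ hK hC hμ 𝒜 hsub hbdd F hF Φ hΦA hΦ0 hInt hVoc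
    hLip β hβ hαβ
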